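/- arXiv:2209.03195 — 10 statements merged into one kernel-verified Lean document; each statement's English description precedes it below -/
import Mathlib

section
/- Let R be a unital ring and a, b, c ∈ R. There exist x, p, q, r ∈ R such that xq + r = a, p - q - r = b, and -p + q - qx = c if and only if a + b + c is a commutator (i.e., a + b + c = xy - yx for some x, y ∈ R). -/
theorem stmt_0 (R : Type*) [Ring R] (a b c : R) :
    (∃ x p q r : R, x * q + r = a ∧ p - q - r = b ∧ -p + q - q * x = c) ↔
      ∃ x y : R, a + b + c = x * y - y * x := by
  constructor
  · rintro ⟨x, p, q, r, rfl, rfl, rfl⟩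
    exact ⟨x, q, by abel⟩
  · rintro ⟨x, y, h⟩
    have hc : c = x * y - y * x - a - b := by rw [← h]; abel
    exact ⟨x, b + y + (a - x * y), y, a - x * y, by abel, by abel, by rw [hc]; abel⟩
end

section
/- Let R be a unital ring and a, b, c, s, t, u ∈ R such that a + b + c - (s + t + u) is a commutator. Then there exists an invertible 3×3 matrix U over R and an upper triangular 3×3 matrix T with diagonal (s, t, u) such that the diagonal of U T U⁻¹ equals (a, b, c). -/
theorem stmt_5 (R : Type*) [Ring R] (a b c s t u : R)
    (h : ∃ x y : R, a + b + c - (s + t + u) = x * y - y * x) :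
    ∃ U V T : Matrix (Fin 3) (Fin 3) R,
      U * V = 1 ∧ V * U = 1 ∧
      (∀ i j : Fin 3, j < i → T i j = 0) ∧
      T 0 0 = s ∧ T 1 1 = t ∧ T 2 2 = u ∧
      (U * T * V) 0 0 = a ∧ (U * T * V) 1 1 = b ∧ (U * T * V) 2 2 = c := by
  obtain ⟨x, y, h⟩ := h
  have ha : a = x * y - y * x + (s + t + u) - b - c := by rw [← h]; abel
  refine ⟨!![1,0,0; x,1,0; s - a - y*x + x,1,1],
    !![1,0,0; -x,1,0; x-(s - a - y*x + x),-1,1],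
    !![s,y,1; 0,t,t + x*y - b - x; 0,0,u], ?_, ?_, ?_,
    by norm_num, by norm_num, by rfl, ?_, ?_, ?_⟩
  · ext i j
    fin_cases i <;> fin_cases j <;>
      simp [Matrix.mul_apply, Fin.sum_univ_three, Matrix.one_apply,
        Matrix.vecHead, Matrix.vecTail] <;> noncomm_ring
  · ext i j
    fin_cases i <;> fin_cases j <;>
      simp [Matrix.mul_apply, Fin.sum_univ_three, Matrix.one_apply,
        Matrix.vecHead, Matrix.vecTail] <;> noncomm_ring
  · intro i j hij
    fin_cases i <;> fin_cases j <;> first | exact absurd hij (by decide) | simp [Matrix.vecHead, Matrix.vecTail]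
  · simp [Matrix.mul_apply, Fin.sum_univ_three, Matrix.vecHead, Matrix.vecTail]
    first | (rw [ha]; noncomm_ring) | noncomm_ring
  · simp [Matrix.mul_apply, Fin.sum_univ_three, Matrix.vecHead, Matrix.vecTail]
    first | (rw [ha]; noncomm_ring) | noncomm_ring
  · simp [Matrix.mul_apply, Fin.sum_univ_three, Matrix.vecHead, Matrix.vecTail]
    first | (rw [ha]; noncomm_ring) | noncomm_ring
end

section
/- Let R be a unital ring, A a 3×3 matrix over R with diagonal (a, b, c), and for k = 1, 2, 3 let s_k, t_k, u_k ∈ R. If a + b + c - Σ_{k=1}^{3}(s_k + t_k + u_k) is a commutator, then A = U T₁ U⁻¹ + T₂ + T₃, where U is invertible, T₁ and T₂ are upper triangular with diagonals (s₁, t₁, u₁) and (s₂, t₂, u₂) respectively, and T₃ is lower triangular with diagonal (u₃, t₃, s₃). -/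
/-!
Any square matrix splits as an upper plus a lower triangular matrix with arbitrarily shared
diagonal, so everything reduces to finding `U` and an upper triangular `T₁` with given diagonal
`(a, b, c)` such that `U T₁ U⁻¹` has a prescribed diagonal `(d₀, d₁, d₂)`. Conjugation changes
the trace by a commutator: for `U = !![1, 0, 0; x, 1, 0; x + 1, 1, 1]` and `T₁` with entries
`y, q, r` above the diagonal, `U T₁ U⁻¹` has diagonal
`(a - y x - q, x y + b - x q - r, (x + 1) q + r + c)`. The entries `q, r` adjust the first two
diagonal entries at will, and then the third is `d₂` exactly when
`d₀ + d₁ + d₂ - (a + b + c) = x y - y x`.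
-/

namespace Matrix

theorem exists_isUpperTriangular_add_isLowerTriangular {n α : Type*} [LinearOrder n]
    [AddCommGroup α] (B : Matrix n n α) (p : n → α) :
    ∃ T₂ T₃ : Matrix n n α, B = T₂ + T₃ ∧ T₂.IsUpperTriangular ∧ T₃.IsLowerTriangular ∧
      (∀ i, T₂ i i = p i) ∧ ∀ i, T₃ i i = B i i - p i := by
  classical
  let T₂ : Matrix n n α := of fun i j => if i < j then B i j else if i = j then p i else 0
  refine ⟨T₂, B - T₂, by abel, fun i j (hji : j < i) => ?_, fun i j (hij : i < j) => ?_,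
    fun i => ?_, fun i => ?_⟩
  · simp [T₂, hji.not_gt, hji.ne']
  · simp [T₂, hij]
  · simp [T₂]
  · simp [T₂]

variable {R : Type*} [Ring R]

theorem unipotent_fin_three_mul_inv (x : R) :
    !![1, 0, 0; x, 1, 0; x + 1, 1, 1] * !![1, 0, 0; -x, 1, 0; -1, -1, 1] = 1 := by
  rw [mul_fin_three, one_fin_three]
  congr <;> noncomm_ring

theorem inv_mul_unipotent_fin_three (x : R) :
    !![1, 0, 0; -x, 1, 0; -1, -1, 1] * !![1, 0, 0; x, 1, 0; x + 1, 1, 1] = 1 := by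
  rw [mul_fin_three, one_fin_three]
  congr <;> noncomm_ring

theorem diag_unipotent_fin_three_conj (x a b c y q r : R) :
    let M := !![1, 0, 0; x, 1, 0; x + 1, 1, 1] * !![a, y, q; 0, b, r; 0, 0, c] *
      !![1, 0, 0; -x, 1, 0; -1, -1, 1]
    M 0 0 = a - y * x - q ∧ M 1 1 = x * y + b - x * q - r ∧ M 2 2 = (x + 1) * q + r + c := by
  simp only [mul_fin_three, of_apply, cons_val', cons_val_zero, cons_val_one, cons_val,
    cons_val_fin_one]
  refine ⟨?_, ?_, ?_⟩ <;> noncomm_ring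

theorem exists_conj_isUpperTriangular_diag (a b c d₀ d₁ d₂ x y : R)
    (h : d₀ + d₁ + d₂ - (a + b + c) = x * y - y * x) :
    ∃ U V T : Matrix (Fin 3) (Fin 3) R, U * V = 1 ∧ V * U = 1 ∧ T.IsUpperTriangular ∧
      T 0 0 = a ∧ T 1 1 = b ∧ T 2 2 = c ∧
      (U * T * V) 0 0 = d₀ ∧ (U * T * V) 1 1 = d₁ ∧ (U * T * V) 2 2 = d₂ := by
  obtain ⟨h₀, h₁, h₂⟩ :=
    diag_unipotent_fin_three_conj x a b c y (a - y * x - d₀)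
      (x * y + b - x * (a - y * x - d₀) - d₁)
  refine ⟨_, _, _, unipotent_fin_three_mul_inv x, inv_mul_unipotent_fin_three x, ?_,
    rfl, rfl, rfl, by rw [h₀]; abel, by rw [h₁]; abel, ?_⟩
  · intro i j hji
    fin_cases i <;> fin_cases j <;> simp_all
  · have hd₂ : d₂ = x * y - y * x + (a + b + c) - d₀ - d₁ := by rw [← h]; abel
    rw [h₂, hd₂]
    noncomm_ring

end Matrix

open Matrix

theorem stmt_6 (R : Type*) [Ring R] (A : Matrix (Fin 3) (Fin 3) R)
    (s t u : Fin 3 → R)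
    (h : ∃ x y : R, A 0 0 + A 1 1 + A 2 2 - (∑ k : Fin 3, (s k + t k + u k))
      = x * y - y * x) :
    ∃ U V T₁ T₂ T₃ : Matrix (Fin 3) (Fin 3) R,
      U * V = 1 ∧ V * U = 1 ∧
      A = U * T₁ * V + T₂ + T₃ ∧
      (∀ i j : Fin 3, j < i → T₁ i j = 0) ∧
      (∀ i j : Fin 3, j < i → T₂ i j = 0) ∧
      (∀ i j : Fin 3, i < j → T₃ i j = 0) ∧
      T₁ 0 0 = s 0 ∧ T₁ 1 1 = t 0 ∧ T₁ 2 2 = u 0 ∧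
      T₂ 0 0 = s 1 ∧ T₂ 1 1 = t 1 ∧ T₂ 2 2 = u 1 ∧
      T₃ 0 0 = u 2 ∧ T₃ 1 1 = t 2 ∧ T₃ 2 2 = s 2 := by
  obtain ⟨x, y, hxy⟩ := h
  rw [Fin.sum_univ_three] at hxy
  obtain ⟨U, V, T₁, hUV, hVU, hT₁, hT₁0, hT₁1, hT₁2, hM0, hM1, hM2⟩ :=
    exists_conj_isUpperTriangular_diag (s 0) (t 0) (u 0)
      (A 0 0 - s 1 - u 2) (A 1 1 - t 1 - t 2) (A 2 2 - u 1 - s 2) x y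
      (by rw [← hxy]; abel)
  obtain ⟨T₂, T₃, hsplit, hT₂, hT₃, hT₂d, hT₃d⟩ :=
    exists_isUpperTriangular_add_isLowerTriangular (A - U * T₁ * V) ![s 1, t 1, u 1]
  refine ⟨U, V, T₁, T₂, T₃, hUV, hVU, by rw [add_assoc, ← hsplit]; abel,
    fun i j => @hT₁ i j, fun i j => @hT₂ i j, fun i j => @hT₃ i j,
    hT₁0, hT₁1, hT₁2, hT₂d 0, hT₂d 1, hT₂d 2, ?_, ?_, ?_⟩
  all_goals
    simp only [hT₃d, Matrix.sub_apply, hM0, hM1, hM2, cons_val_zero, cons_val_one, cons_val]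
    abel
end

section
/- Let R be a unital ring and A a 3×3 matrix over R whose trace is a commutator. For k = 1, 2, 3 let s_k, t_k, u_k be central elements of R with Σ_k (s_k + t_k + u_k) = 0, and set p_k(X) = (X - s_k)(X - t_k)(X - u_k). Then A = A₁ + A₂ + A₃ with p_k(A_k) = 0 for each k. -/
/-!
Write `A = U + V + D` with `U` upper triangular with diagonal `(s₀, t₀, u₀)` and `V` lower
triangular with diagonal `(u₁, t₁, s₁)`, which absorb all off-diagonal entries of `A - D`. Being
triangular, `U` and `V` are annihilated by `p₀` and `p₁`. The diagonal that remains for `D` sums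
to `s₂ + t₂ + u₂ + [x, y]`. Such a `D` is a conjugate `L T L⁻¹` of an upper triangular `T` with
diagonal `(s₂, t₂, u₂)` by a lower unitriangular `L`: conjugation preserves `p₂(T) = 0` because
the roots are central, and an entry `x` of `L` meeting the entry `y` of `T` adds `[x, y]` to the
trace.
-/

open Matrix

section Triangular

variable {R : Type*} [Ring R]

theorem Matrix.upperTriangular_fin_three_cubic_eq_zero (a b c p q r : R) :
    (!![a, p, q; 0, b, r; 0, 0, c] - a • (1 : Matrix (Fin 3) (Fin 3) R)) *
    (!![a, p, q; 0, b, r; 0, 0, c] - b • 1) *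
    (!![a, p, q; 0, b, r; 0, 0, c] - c • 1) = 0 := by
  simp [one_fin_three, ← Matrix.ext_iff, Fin.forall_fin_succ]

-- Without centrality the diagonal has to be read in the reverse order of the factors.
theorem Matrix.lowerTriangular_fin_three_cubic_eq_zero (a b c p q r : R) :
    (!![c, 0, 0; p, b, 0; q, r, a] - a • (1 : Matrix (Fin 3) (Fin 3) R)) *
    (!![c, 0, 0; p, b, 0; q, r, a] - b • 1) *
    (!![c, 0, 0; p, b, 0; q, r, a] - c • 1) = 0 := by
  simp [one_fin_three, ← Matrix.ext_iff, Fin.forall_fin_succ]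

theorem Matrix.eq_upperTriangular_add_lowerTriangular_fin_three (M : Matrix (Fin 3) (Fin 3) R)
    {a₀ a₁ a₂ b₀ b₁ b₂ : R} (h₀ : M 0 0 = a₀ + b₀) (h₁ : M 1 1 = a₁ + b₁)
    (h₂ : M 2 2 = a₂ + b₂) :
    M = !![a₀, M 0 1, M 0 2; 0, a₁, M 1 2; 0, 0, a₂] +
      !![b₀, 0, 0; M 1 0, b₁, 0; M 2 0, M 2 1, b₂] := by
  ext i j
  fin_cases i <;> fin_cases j <;> simp [h₀, h₁, h₂]

end Triangular

theorem Units.conj_cubic {S : Type*} [Ring S] (P : Sˣ) (T : S) {a b c : S}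
    (ha : a ∈ Subring.center S) (hb : b ∈ Subring.center S) (hc : c ∈ Subring.center S) :
    (P * T * ↑P⁻¹ - a) * (P * T * ↑P⁻¹ - b) * (P * T * ↑P⁻¹ - c) =
      P * ((T - a) * (T - b) * (T - c)) * ↑P⁻¹ := by
  have conj_sub : ∀ z ∈ Subring.center S, P * T * ↑P⁻¹ - z = P * (T - z) * ↑P⁻¹ := by
    intro z hz
    rw [mul_sub, sub_mul, Subring.mem_center_iff.mp hz P, Units.mul_inv_cancel_right]
  rw [conj_sub a ha, conj_sub b hb, conj_sub c hc]
  simp only [mul_assoc, Units.inv_mul_cancel_left]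

theorem Matrix.smul_one_mem_center {n R : Type*} [Fintype n] [DecidableEq n] [Ring R] {c : R}
    (hc : c ∈ Subring.center R) : c • (1 : Matrix n n R) ∈ Subring.center (Matrix n n R) := by
  rw [subringCenter_eq_scalar_map]
  exact ⟨c, hc, by simp [smul_one_eq_diagonal]⟩

theorem Matrix.exists_diag_eq_cubic_eq_zero_of_sum_eq {R : Type*} [Ring R] {a b c : R}
    (ha : a ∈ Subring.center R) (hb : b ∈ Subring.center R) (hc : c ∈ Subring.center R)
    (x y e₀ e₁ e₂ : R) (he : e₀ + e₁ + e₂ = a + b + c + (x * y - y * x)) :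
    ∃ D : Matrix (Fin 3) (Fin 3) R, D 0 0 = e₀ ∧ D 1 1 = e₁ ∧ D 2 2 = e₂ ∧
      (D - a • 1) * (D - b • 1) * (D - c • 1) = 0 := by
  -- `L * T * L'` has diagonal `(a - p + y n - y x, p - y n + b - n, x y + n + c)`.
  set n := e₂ - c - x * y
  set p := e₁ - b + n + y * n
  let T : Matrix (Fin 3) (Fin 3) R := !![a, p, y; 0, b, 1; 0, 0, c]
  let L : Matrix (Fin 3) (Fin 3) R := !![1, 0, 0; 1, 1, 0; x, n, 1]
  let L' : Matrix (Fin 3) (Fin 3) R := !![1, 0, 0; -1, 1, 0; n - x, -n, 1]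
  have hLL' : L * L' = 1 := by
    ext i j; fin_cases i <;> fin_cases j <;> simp [L, L']; abel
  have hL'L : L' * L = 1 := by
    ext i j; fin_cases i <;> fin_cases j <;> simp [L, L']
  have he₀ : e₀ = a + b + c + (x * y - y * x) - e₁ - e₂ := by rw [← he]; abel
  refine ⟨L * T * L', ?_, ?_, ?_, ?_⟩
  · rw [he₀]
    simp [T, L, L', p, n, mul_sub, add_mul]
    abel
  · simp [T, L, L', p, n, mul_sub, add_mul]
    abel
  · simp [T, L, L', n]
    abel
  · have h := Units.conj_cubic ⟨L, L', hLL', hL'L⟩ T (smul_one_mem_center ha)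
      (smul_one_mem_center hb) (smul_one_mem_center hc)
    rwa [upperTriangular_fin_three_cubic_eq_zero, mul_zero, zero_mul] at h

theorem stmt_7 (R : Type*) [Ring R] (A : Matrix (Fin 3) (Fin 3) R)
    (s t u : Fin 3 → R)
    (hs : ∀ k, s k ∈ Subring.center R) (ht : ∀ k, t k ∈ Subring.center R)
    (hu : ∀ k, u k ∈ Subring.center R)
    (hsum : ∑ k : Fin 3, (s k + t k + u k) = 0)
    (h : ∃ x y : R, A 0 0 + A 1 1 + A 2 2 = x * y - y * x) :
    ∃ B : Fin 3 → Matrix (Fin 3) (Fin 3) R,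
      A = B 0 + B 1 + B 2 ∧
      ∀ k : Fin 3,
        (B k - s k • (1 : Matrix (Fin 3) (Fin 3) R)) *
        (B k - t k • (1 : Matrix (Fin 3) (Fin 3) R)) *
        (B k - u k • (1 : Matrix (Fin 3) (Fin 3) R)) = 0 := by
  obtain ⟨x, y, hxy⟩ := h
  rw [Fin.sum_univ_three] at hsum
  obtain ⟨D, hD₀, hD₁, hD₂, hD_cubic⟩ := exists_diag_eq_cubic_eq_zero_of_sum_eq (hs 2) (ht 2)
    (hu 2) x y (A 0 0 - s 0 - u 1) (A 1 1 - t 0 - t 1) (A 2 2 - u 0 - s 1) (by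
      rw [← hxy, eq_neg_of_add_eq_zero_right hsum]
      abel)
  have hM₀ : (A - D) 0 0 = s 0 + u 1 := by rw [Matrix.sub_apply, hD₀]; abel
  have hM₁ : (A - D) 1 1 = t 0 + t 1 := by rw [Matrix.sub_apply, hD₁]; abel
  have hM₂ : (A - D) 2 2 = u 0 + s 1 := by rw [Matrix.sub_apply, hD₂]; abel
  set M := A - D
  refine ⟨![!![s 0, M 0 1, M 0 2; 0, t 0, M 1 2; 0, 0, u 0],
    !![u 1, 0, 0; M 1 0, t 1, 0; M 2 0, M 2 1, s 1], D], ?_, ?_⟩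
  · have hA : A = M + D := (sub_add_cancel A D).symm
    rwa [eq_upperTriangular_add_lowerTriangular_fin_three M hM₀ hM₁ hM₂] at hA
  · intro k
    fin_cases k
    · exact upperTriangular_fin_three_cubic_eq_zero _ _ _ _ _ _
    · exact lowerTriangular_fin_three_cubic_eq_zero _ _ _ _ _ _
    · exact hD_cubic
end

section
/- Let R be a unital ring admitting an element r such that the inner derivation ad_r(s) = rs - sr is surjective. Then the matrix ring R₃ of 3×3 matrices over R is the sum of three subrings S_u, S_ℓ, and U S_u U⁻¹, each of which is nilpotent of index 3, where S_u (resp. S_ℓ) is the ring of strictly upper (resp. strictly lower) triangular matrices and U is a fixed invertible matrix. -/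
/-!
Each strictly triangular factor pushes the nonzero entries of a product one more step away from
the diagonal, so `n` strictly upper (or lower) triangular `n × n` matrices multiply to zero.

Every matrix is its diagonal plus a strictly upper and a strictly lower part, so it suffices to
conjugate some strictly upper `Z` by `U = conjugator r` so as to match the diagonal of `A`. The
diagonal of `U Z U⁻¹` sums to `r a - a r` with `a = Z 0 1` and is otherwise freely adjustable
through the other entries of `Z`; surjectivity of `s ↦ r s - s r` provides `a` with
`r a - a r = trace A`.
-/

namespace Matrix

section Band

variable {ι R : Type*} [Fintype ι] [NonUnitalNonAssocSemiring R] {w : ι → ℤ}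

theorem mul_apply_eq_zero_of_band {a b : ℤ} {M N : Matrix ι ι R}
    (hM : ∀ i j, w j < w i + a → M i j = 0) (hN : ∀ i j, w j < w i + b → N i j = 0)
    (i j : ι) (hij : w j < w i + (a + b)) : (M * N) i j = 0 := by
  rw [mul_apply]
  refine Finset.sum_eq_zero fun k _ => ?_
  by_cases hk : w k < w i + a
  · rw [hM i k hk, zero_mul]
  · rw [hN k j (by omega), mul_zero]

end Band

section StrictTriangular

variable {ι R : Type*} [Fintype ι] [DecidableEq ι] [Semiring R]

theorem list_prod_apply_eq_zero_of_band {w : ι → ℤ} (l : List (Matrix ι ι R))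
    (hl : ∀ M ∈ l, ∀ i j, w j < w i + 1 → M i j = 0) (i j : ι) (hij : w j < w i + l.length) :
    l.prod i j = 0 := by
  induction l generalizing i j with
  | nil => exact one_apply_ne' fun h => by subst h; simp at hij
  | cons M l ih =>
    rw [List.prod_cons]
    refine mul_apply_eq_zero_of_band (hl M (by simp)) (ih fun N hN => hl N (by simp [hN])) i j ?_
    simpa [add_comm] using hij

theorem list_prod_eq_zero_of_strictUpper {n : ℕ} (l : List (Matrix (Fin n) (Fin n) R))
    (hlen : n ≤ l.length) (hl : ∀ M ∈ l, ∀ i j, j ≤ i → M i j = 0) : l.prod = 0 := by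
  ext i j
  refine list_prod_apply_eq_zero_of_band (w := fun i => i.val) l
    (fun M hM i j hij => hl M hM i j (by rw [Fin.le_def]; omega)) i j ?_
  omega

theorem list_prod_eq_zero_of_strictLower {n : ℕ} (l : List (Matrix (Fin n) (Fin n) R))
    (hlen : n ≤ l.length) (hl : ∀ M ∈ l, ∀ i j, i ≤ j → M i j = 0) : l.prod = 0 := by
  ext i j
  refine list_prod_apply_eq_zero_of_band (w := fun i => -(i.val : ℤ)) l
    (fun M hM i j hij => hl M hM i j (by rw [Fin.le_def]; omega)) i j ?_
  omega

end StrictTriangular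

theorem exists_strictUpper_add_strictLower {ι R : Type*} [LinearOrder ι] [AddZeroClass R]
    (N : Matrix ι ι R) (hN : ∀ i, N i i = 0) :
    ∃ X Y : Matrix ι ι R, (∀ i j, j ≤ i → X i j = 0) ∧ (∀ i j, i ≤ j → Y i j = 0) ∧
      N = X + Y := by
  refine ⟨of fun i j => if i < j then N i j else 0, of fun i j => if j < i then N i j else 0,
    fun i j hij => by simp [not_lt.mpr hij], fun i j hij => by simp [not_lt.mpr hij], ?_⟩
  ext i j
  rcases lt_trichotomy i j with h | rfl | h
  · simp [h, h.not_gt]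
  · simp [hN]
  · simp [h, h.not_gt]

end Matrix

section Conjugator

variable {R : Type*} [Ring R]

def conjugator (r : R) : Matrix (Fin 3) (Fin 3) R := !![1, 0, 0; r, 1, 0; r - 1, 1, 1]

def conjugatorInv (r : R) : Matrix (Fin 3) (Fin 3) R := !![1, 0, 0; -r, 1, 0; 1, -1, 1]

theorem conjugator_mul_conjugatorInv (r : R) : conjugator r * conjugatorInv r = 1 := by
  simp [conjugator, conjugatorInv, Matrix.one_fin_three]

theorem conjugatorInv_mul_conjugator (r : R) : conjugatorInv r * conjugator r = 1 := by
  simp [conjugator, conjugatorInv, Matrix.one_fin_three]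
  abel

theorem diag_conjugator_mul_mul_conjugatorInv (r a b c : R) :
    (conjugator r * !![0, a, b; 0, 0, c; 0, 0, 0] * conjugatorInv r).diag =
      ![b - a * r, r * a - r * b - c, (r - 1) * b + c] := by
  ext i
  fin_cases i <;> simp [conjugator, conjugatorInv] <;> noncomm_ring

theorem exists_strictUpper_diag_conj_eq (r a : R) (d : Fin 3 → R)
    (hd : ∑ i, d i = r * a - a * r) :
    ∃ Z : Matrix (Fin 3) (Fin 3) R, (∀ i j, j ≤ i → Z i j = 0) ∧
      (conjugator r * Z * conjugatorInv r).diag = d := by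
  set b := d 0 + a * r
  refine ⟨!![0, a, b; 0, 0, d 2 - (r - 1) * b; 0, 0, 0], ?_, ?_⟩
  · intro i j hij
    fin_cases i <;> fin_cases j <;> first | rfl | exact absurd hij (by decide)
  · have hd1 : d 1 = r * a - a * r - d 0 - d 2 := by
      rw [← hd, Fin.sum_univ_three]
      abel
    rw [diag_conjugator_mul_mul_conjugatorInv]
    ext i
    fin_cases i
    · simp [b]
    · simp [b, hd1]
      noncomm_ring
    · simp

end Conjugator

theorem stmt_11 (R : Type*) [Ring R]
    (h : ∃ r : R, Function.Surjective (fun s => r * s - s * r)) :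
    ∃ U V : Matrix (Fin 3) (Fin 3) R,
      U * V = 1 ∧ V * U = 1 ∧
      (∀ A : Matrix (Fin 3) (Fin 3) R, ∃ X Y Z : Matrix (Fin 3) (Fin 3) R,
        (∀ i j : Fin 3, j ≤ i → X i j = 0) ∧
        (∀ i j : Fin 3, i ≤ j → Y i j = 0) ∧
        (∀ i j : Fin 3, j ≤ i → Z i j = 0) ∧
        A = X + Y + U * Z * V) ∧
      (∀ X₁ X₂ X₃ : Matrix (Fin 3) (Fin 3) R,
        (∀ i j : Fin 3, j ≤ i → X₁ i j = 0) → (∀ i j : Fin 3, j ≤ i → X₂ i j = 0) →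
        (∀ i j : Fin 3, j ≤ i → X₃ i j = 0) → X₁ * X₂ * X₃ = 0) ∧
      (∀ Y₁ Y₂ Y₃ : Matrix (Fin 3) (Fin 3) R,
        (∀ i j : Fin 3, i ≤ j → Y₁ i j = 0) → (∀ i j : Fin 3, i ≤ j → Y₂ i j = 0) →
        (∀ i j : Fin 3, i ≤ j → Y₃ i j = 0) → Y₁ * Y₂ * Y₃ = 0) := by
  obtain ⟨r, hr⟩ := h
  refine ⟨conjugator r, conjugatorInv r, conjugator_mul_conjugatorInv r,
    conjugatorInv_mul_conjugator r, fun A => ?_, fun X₁ X₂ X₃ h₁ h₂ h₃ => ?_,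
    fun Y₁ Y₂ Y₃ h₁ h₂ h₃ => ?_⟩
  · obtain ⟨a, ha⟩ := hr A.trace
    obtain ⟨Z, hZ, hdiag⟩ := exists_strictUpper_diag_conj_eq r a A.diag ha.symm
    obtain ⟨X, Y, hX, hY, hXY⟩ := Matrix.exists_strictUpper_add_strictLower
      (A - conjugator r * Z * conjugatorInv r) fun i => by simp [← Matrix.diag_apply, hdiag]
    exact ⟨X, Y, Z, hX, hY, hZ, by rw [← hXY]; abel⟩
  · simpa [mul_assoc] using
      Matrix.list_prod_eq_zero_of_strictUpper [X₁, X₂, X₃] le_rfl (by simpa using ⟨h₁, h₂, h₃⟩)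
  · simpa [mul_assoc] using
      Matrix.list_prod_eq_zero_of_strictLower [Y₁, Y₂, Y₃] le_rfl (by simpa using ⟨h₁, h₂, h₃⟩)
end

section
/- Let R be a unital ring and r ∈ R with ad_r surjective. Then for every 3×3 matrix A over R there exists a strictly upper triangular matrix T such that the diagonal of A - U(r) T U(r)⁻¹ is zero, where U(r) is the matrix with rows (r,1,1),(1,1,0),(1,0,0). -/
/-! For strictly upper triangular `T` with entries `a, b, c`, the diagonal of `U(r) T U(r)⁻¹` is
`(r b + c, a - b - c, b - b r - a)`. Its sum is `r b - b r`, so matching the diagonal of `A`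
forces `ad_r b = tr A`; once `b` is chosen this way, `c` and `a` are read off the first two
equations and the third one holds automatically. -/

theorem diag_conj_strictUpperTriangular {R : Type*} [Ring R] (r a b c : R) :
    (!![r, 1, 1; 1, 1, 0; 1, 0, 0] * !![0, a, b; 0, 0, c; 0, 0, 0] *
      !![0, 0, 1; 0, 1, -1; 1, -1, 1 - r]).diag = ![r * b + c, a - b - c, b - b * r - a] := by
  ext i
  fin_cases i <;> simp <;> noncomm_ring

theorem exists_diag_eq_of_surjective_ad {R : Type*} [Ring R] {r : R}
    (h : Function.Surjective (fun s => r * s - s * r)) (x y z : R) :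
    ∃ a b c : R, r * b + c = x ∧ a - b - c = y ∧ b - b * r - a = z := by
  obtain ⟨b, hb⟩ : ∃ b, r * b - b * r = x + y + z := h (x + y + z)
  refine ⟨y + b + (x - r * b), b, x - r * b, by noncomm_ring, by noncomm_ring, ?_⟩
  calc b - b * r - (y + b + (x - r * b)) = (r * b - b * r) - x - y := by noncomm_ring
    _ = z := by rw [hb]; abel

theorem stmt_12 (R : Type*) [Ring R] (r : R)
    (h : Function.Surjective (fun s => r * s - s * r)) :
    ∀ A : Matrix (Fin 3) (Fin 3) R, ∃ T : Matrix (Fin 3) (Fin 3) R,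
      (∀ i j : Fin 3, j ≤ i → T i j = 0) ∧
      (∀ i : Fin 3,
        (A - !![r, 1, 1; 1, 1, 0; 1, 0, 0] * T *
          !![0, 0, 1; 0, 1, -1; 1, -1, 1 - r]) i i = 0) := by
  intro A
  obtain ⟨a, b, c, h₀, h₁, h₂⟩ := exists_diag_eq_of_surjective_ad h (A 0 0) (A 1 1) (A 2 2)
  refine ⟨!![0, a, b; 0, 0, c; 0, 0, 0], ?_, fun i => ?_⟩
  · intro i j hji
    fin_cases i <;> fin_cases j <;> simp_all
  · rw [Matrix.sub_apply, sub_eq_zero, ← Matrix.diag_apply (A := _ * _ * _),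
      diag_conj_strictUpperTriangular]
    fin_cases i <;> simp [h₀, h₁, h₂]
end

section
/- Let n be a positive integer, m = ⌊log₂ n⌋, and define the sequence n₀ = n, n_k = ⌊(n_{k-1} + 1)/2⌋. Then n_m = 1 if n = 2^m, and n_m = 2 otherwise. -/
lemma aux_15 : ∀ m (f : ℕ → ℕ) (n : ℕ), f 0 = n →
    (∀ k, f (k + 1) = (f k + 1) / 2) → 2 ^ m ≤ n → n ≤ 2 ^ (m + 1) →
    f m = if n = 2 ^ m then 1 else 2 := by
  intro m
  induction m with
  | zero =>
    intro f n h0 hrec h1 h2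
    simp only [pow_zero] at *
    interval_cases n <;> simp [h0]
  | succ m ih =>
    intro f n h0 hrec h1 h2
    have h1' : 2 ^ (m + 1) = 2 * 2 ^ m := by ring
    have h2' : 2 ^ (m + 2) = 2 * 2 ^ (m + 1) := by ring
    have key := ih (fun k => f (k + 1)) ((n + 1) / 2)
      (by simp [hrec 0, h0]) (fun k => hrec (k + 1))
      (by omega) (by omega)
    rw [key]
    have : (n + 1) / 2 = 2 ^ m ↔ n = 2 ^ (m + 1) := by omega
    by_cases h : n = 2 ^ (m + 1) <;> simp [h, this.mpr, this]
    omega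

theorem stmt_15 (n : ℕ) (hn : 0 < n) (f : ℕ → ℕ)
    (h0 : f 0 = n) (hrec : ∀ k, f (k + 1) = (f k + 1) / 2) :
    f (Nat.log 2 n) = if n = 2 ^ (Nat.log 2 n) then 1 else 2 := by
  exact aux_15 _ f n h0 hrec (Nat.pow_log_le_self 2 hn.ne')
    (Nat.lt_pow_succ_log_self (by norm_num) n).le
end

section
/- Let R be a unital ring, n ≥ 2, and A an n×n matrix over R. Then A can be written as A = B + T_u + T_ℓ + M, where B is a sum of ⌊log₂ n⌋ square-zero matrices each with zero trace, T_u is upper triangular with zero diagonal, T_ℓ is lower triangular with zero diagonal, and M is a block-diagonal matrix of the form diag(0_{n-v}, D) with D a v×v matrix and v ∈ {1, 2}. -/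
theorem stmt_17 (R : Type*) [Ring R] (n : ℕ) (hn : 2 ≤ n)
    (A : Matrix (Fin n) (Fin n) R) :
    ∃ v : ℕ, (v = 1 ∨ v = 2) ∧
    ∃ N : Fin (Nat.log 2 n) → Matrix (Fin n) (Fin n) R,
    ∃ Tu Tl M : Matrix (Fin n) (Fin n) R,
      (∀ i, N i ^ 2 = 0 ∧ Matrix.trace (N i) = 0) ∧
      (∀ i j : Fin n, j ≤ i → Tu i j = 0) ∧
      (∀ i j : Fin n, i ≤ j → Tl i j = 0) ∧
      (∀ i j : Fin n, ((i : ℕ) < n - v ∨ (j : ℕ) < n - v) → M i j = 0) ∧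
      A = (∑ i, N i) + Tu + Tl + M := by
  have hc : n - 2 < n := by omega
  set c := n - 2 with hcdef
  set p : Fin n := ⟨c, hc⟩ with hpdef
  set s : R := ∑ k ∈ Finset.univ.filter (fun k : Fin n => (k : ℕ) < c), A k k with hsdef
  set u : Fin n → R := fun k => if (k : ℕ) < c then A k k else if k = p then -s else 0
    with hudef
  set v : Fin n → R := fun k => if (k : ℕ) ≤ c then 1 else 0 with hvdef
  set N0 : Matrix (Fin n) (Fin n) R := Matrix.of fun i j => u i * v j with hN0def
  have hform : ∀ (k : Fin n) (x y : R),
      (if (k : ℕ) < c then A k k else if k = p then -s else 0) = x →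
      True := fun _ _ _ _ => trivial
  have hvu : ∀ k : Fin n, v k * u k = if (k : ℕ) < c then A k k else if k = p then -s else 0 := by
    intro k
    by_cases h : (k : ℕ) < c
    · simp [hudef, hvdef, h, le_of_lt h]
    · by_cases h2 : k = p
      · subst h2; simp [hudef, hvdef, h, hpdef]
      · simp [hudef, hvdef, h, h2]
  have huv : ∀ k : Fin n, u k * v k = if (k : ℕ) < c then A k k else if k = p then -s else 0 := by
    intro k
    by_cases h : (k : ℕ) < c
    · simp [hudef, hvdef, h, le_of_lt h]
    · by_cases h2 : k = p
      · subst h2; simp [hudef, hvdef, h, hpdef]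
      · simp [hudef, hvdef, h, h2]
  have hsumform : ∑ k : Fin n,
      (if (k : ℕ) < c then A k k else if k = p then -s else 0) = 0 := by
    rw [Finset.sum_ite]
    have h2 : ∑ k ∈ Finset.univ.filter (fun k : Fin n => ¬ (k : ℕ) < c),
        (if k = p then -s else 0) = -s := by
      rw [Finset.sum_ite_eq']
      simp [hpdef]
    rw [h2]
    simp [hsdef]
  have hS : ∑ k : Fin n, v k * u k = 0 := by
    simp only [hvu]; exact hsumform
  have hT : ∑ k : Fin n, u k * v k = 0 := by
    simp only [huv]; exact hsumform
  have hN0sq : N0 ^ 2 = 0 := by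
    ext i j
    rw [pow_two]
    simp only [Matrix.mul_apply, hN0def, Matrix.of_apply, Matrix.zero_apply]
    calc ∑ k, u i * v k * (u k * v j)
        = u i * (∑ k, v k * u k) * v j := by
          rw [Finset.mul_sum, Finset.sum_mul]
          apply Finset.sum_congr rfl
          intro k _
          rw [mul_assoc (u i), mul_assoc (u i), mul_assoc (v k)]
      _ = 0 := by rw [hS, mul_zero, zero_mul]
  have htr : Matrix.trace N0 = 0 := by
    simp only [Matrix.trace, Matrix.diag, hN0def, Matrix.of_apply]
    exact hT
  have hL : 0 < Nat.log 2 n := Nat.log_pos (by norm_num) hn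
  set z : Fin (Nat.log 2 n) := ⟨0, hL⟩ with hzdef
  refine ⟨2, Or.inr rfl, fun k => if k = z then N0 else 0,
    Matrix.of (fun i j => if (i : ℕ) < (j : ℕ) ∧ ((i : ℕ) < c ∨ (j : ℕ) < c)
      then (A - N0) i j else 0),
    Matrix.of (fun i j => if (j : ℕ) < (i : ℕ) ∧ ((i : ℕ) < c ∨ (j : ℕ) < c)
      then (A - N0) i j else 0),
    Matrix.of (fun i j => if c ≤ (i : ℕ) ∧ c ≤ (j : ℕ) then (A - N0) i j else 0),
    ?_, ?_, ?_, ?_, ?_⟩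
  · intro k
    by_cases h : k = z
    · simp [h, hN0sq, htr]
    · simp [h]
  · intro i j hji
    have hji' : (j : ℕ) ≤ (i : ℕ) := hji
    have h1 : ¬ ((i : ℕ) < (j : ℕ) ∧ ((i : ℕ) < c ∨ (j : ℕ) < c)) := by omega
    simp only [Matrix.of_apply, if_neg h1]
  · intro i j hij
    have hij' : (i : ℕ) ≤ (j : ℕ) := hij
    have h1 : ¬ ((j : ℕ) < (i : ℕ) ∧ ((i : ℕ) < c ∨ (j : ℕ) < c)) := by omega
    simp only [Matrix.of_apply, if_neg h1]
  · intro i j hij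
    have : ¬ (c ≤ (i : ℕ) ∧ c ≤ (j : ℕ)) := by omega
    simp [this]
  · have hsum : (∑ k, (if k = z then N0 else 0)) = N0 := by
      rw [Finset.sum_ite_eq']
      simp
    rw [hsum]
    ext i j
    simp only [Matrix.add_apply, Matrix.of_apply]
    rcases lt_trichotomy ((i : ℕ)) ((j : ℕ)) with h | h | h
    · by_cases hb : c ≤ (i : ℕ) ∧ c ≤ (j : ℕ)
      · have h1 : ¬ ((i : ℕ) < (j : ℕ) ∧ ((i : ℕ) < c ∨ (j : ℕ) < c)) := by omega
        have h2 : ¬ ((j : ℕ) < (i : ℕ) ∧ ((i : ℕ) < c ∨ (j : ℕ) < c)) := by omega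
        simp only [if_pos hb, if_neg h1, if_neg h2, Matrix.sub_apply]
        abel
      · have hb' : (i : ℕ) < c ∨ (j : ℕ) < c := by omega
        have h2 : ¬ ((j : ℕ) < (i : ℕ) ∧ ((i : ℕ) < c ∨ (j : ℕ) < c)) := by omega
        simp only [if_pos (And.intro h hb'), if_neg h2, if_neg hb, Matrix.sub_apply]
        abel
    · -- diagonal
      have hij : i = j := Fin.ext h
      subst hij
      have h1 : ¬ ((i : ℕ) < (i : ℕ) ∧ ((i : ℕ) < c ∨ (i : ℕ) < c)) := by omega
      by_cases hb : c ≤ (i : ℕ)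
      · simp only [if_neg h1, if_pos (And.intro hb hb), Matrix.sub_apply]
        abel
      · have hic : (i : ℕ) < c := by omega
        have hb' : ¬ (c ≤ (i : ℕ) ∧ c ≤ (i : ℕ)) := by omega
        simp only [if_neg h1, if_neg hb', hN0def, Matrix.of_apply]
        have : u i * v i = A i i := by
          rw [huv i, if_pos hic]
        rw [this]
        abel
    · by_cases hb : c ≤ (i : ℕ) ∧ c ≤ (j : ℕ)
      · have h1 : ¬ ((i : ℕ) < (j : ℕ) ∧ ((i : ℕ) < c ∨ (j : ℕ) < c)) := by omega
        have h2 : ¬ ((j : ℕ) < (i : ℕ) ∧ ((i : ℕ) < c ∨ (j : ℕ) < c)) := by omega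
        simp only [if_pos hb, if_neg h1, if_neg h2, Matrix.sub_apply]
        abel
      · have hb' : (i : ℕ) < c ∨ (j : ℕ) < c := by omega
        have h1 : ¬ ((i : ℕ) < (j : ℕ) ∧ ((i : ℕ) < c ∨ (j : ℕ) < c)) := by omega
        simp only [if_neg h1, if_pos (And.intro h hb'), if_neg hb, Matrix.sub_apply]
        abel
end

section
/- Let R be a unital ring and A a 3×3 matrix over R whose trace is a commutator. Then A = N + K + L, where N is a nilpotent matrix with N³ = 0, K is upper triangular with zero diagonal, and L is lower triangular with zero diagonal; in particular A is a sum of three nilpotent matrices of nilpotency index at most 3. -/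
/-!
Only the diagonal of `A` matters: if `N` has the same diagonal as `A`, then `A - N` is the sum of
its strictly upper and strictly lower triangular parts, and a strictly triangular `n × n` matrix
has vanishing `n`-th power. A suitable `N` with `N ^ 3 = 0` exists because the diagonal of `A`
sums to a commutator `x * y - y * x`: conjugating a well-chosen strictly upper triangular matrix by
a lower unitriangular one realises any diagonal `(a, b, x * y - y * x - a - b)`.
-/

theorem conj_pow_succ_of_mul_eq_one {M : Type*} [Monoid M] {p q : M} (hqp : q * p = 1) (m : M)
    (k : ℕ) : (p * m * q) ^ (k + 1) = p * m ^ (k + 1) * q := by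
  induction k with
  | zero => simp
  | succ k ih =>
    rw [pow_succ, ih, pow_succ m (k + 1)]
    simp only [mul_assoc]
    rw [← mul_assoc q p, hqp, one_mul]

namespace Matrix

section Nilpotent

variable {ι R : Type*} [Semiring R]

theorem pow_apply_eq_zero_of_rank_lt_add [Fintype ι] [DecidableEq ι] (f : ι → ℕ)
    {K : Matrix ι ι R} (hK : ∀ i j, f j ≤ f i → K i j = 0) :
    ∀ k i j, f j < f i + k → (K ^ k) i j = 0 := by
  intro k
  induction k with
  | zero =>
    intro i j hij
    exact one_apply_ne fun h => by subst h; omega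
  | succ k ih =>
    intro i j hij
    rw [pow_succ, mul_apply]
    refine Finset.sum_eq_zero fun l _ => ?_
    rcases lt_or_ge (f l) (f i + k) with hl | hl
    · rw [ih i l hl, zero_mul]
    · rw [hK l j (by omega), mul_zero]

theorem pow_eq_zero_of_rank_lt [Fintype ι] [DecidableEq ι] {n : ℕ} (f : ι → ℕ)
    (hf : ∀ i, f i < n) {K : Matrix ι ι R} (hK : ∀ i j, f j ≤ f i → K i j = 0) :
    K ^ n = 0 := by
  ext i j
  exact pow_apply_eq_zero_of_rank_lt_add f hK n i j (by have := hf j; omega)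

theorem pow_eq_zero_of_upper {n : ℕ} {K : Matrix (Fin n) (Fin n) R}
    (hK : ∀ i j, j ≤ i → K i j = 0) : K ^ n = 0 :=
  pow_eq_zero_of_rank_lt (fun i : Fin n => (i : ℕ)) Fin.isLt hK

theorem pow_eq_zero_of_lower {n : ℕ} {K : Matrix (Fin n) (Fin n) R}
    (hK : ∀ i j, i ≤ j → K i j = 0) : K ^ n = 0 :=
  pow_eq_zero_of_rank_lt (fun i => i.rev) (fun i => i.rev.isLt) fun i j h =>
    hK i j (Fin.rev_le_rev.mp h)

end Nilpotent

section StrictParts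

variable {n α : Type*} [LinearOrder n]

def strictUpper [Zero α] (B : Matrix n n α) : Matrix n n α :=
  of fun i j => if i < j then B i j else 0

def strictLower [Zero α] (B : Matrix n n α) : Matrix n n α :=
  of fun i j => if j < i then B i j else 0

theorem strictUpper_apply_of_le [Zero α] (B : Matrix n n α) {i j : n} (h : j ≤ i) :
    B.strictUpper i j = 0 :=
  if_neg h.not_gt

theorem strictLower_apply_of_le [Zero α] (B : Matrix n n α) {i j : n} (h : i ≤ j) :
    B.strictLower i j = 0 :=
  if_neg h.not_gt

theorem strictUpper_add_strictLower [AddZeroClass α] {B : Matrix n n α} (hB : ∀ i, B i i = 0) :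
    B.strictUpper + B.strictLower = B := by
  ext i j
  rcases lt_trichotomy i j with h | rfl | h
  · simp [strictUpper, strictLower, h, h.not_gt]
  · simp [strictUpper, strictLower, hB]
  · simp [strictUpper, strictLower, h, h.not_gt]

end StrictParts

end Matrix

section Fin3

variable {R : Type*} [Ring R]

-- The right factor is a left inverse of the left one, so this is a conjugate of the middle one.
def commutatorTraceNilpotent (x y a b : R) : Matrix (Fin 3) (Fin 3) R :=
  !![1, 0, 0; x, 1, 0; x - y * x - a, 1, 1] * !![0, y, 1; 0, 0, x * y - x - b; 0, 0, 0] *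
    !![1, 0, 0; -x, 1, 0; y * x + a, -1, 1]

theorem commutatorTraceNilpotent_pow_three (x y a b : R) :
    commutatorTraceNilpotent x y a b ^ 3 = 0 := by
  rw [commutatorTraceNilpotent, conj_pow_succ_of_mul_eq_one (k := 2),
    Matrix.pow_eq_zero_of_upper, mul_zero, zero_mul]
  · intro i j h
    fin_cases i <;> fin_cases j <;> simp_all
  · ext i j
    fin_cases i <;> fin_cases j <;> simp [Matrix.mul_apply, Fin.sum_univ_three]
    abel

theorem commutatorTraceNilpotent_diag (x y a b : R) :
    (commutatorTraceNilpotent x y a b).diag = ![a, b, x * y - y * x - a - b] := by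
  ext i
  fin_cases i <;> simp [commutatorTraceNilpotent] <;> noncomm_ring

theorem exists_pow_three_eq_zero_diag_eq {A : Matrix (Fin 3) (Fin 3) R} {x y : R}
    (h : A.trace = x * y - y * x) :
    ∃ N : Matrix (Fin 3) (Fin 3) R, N ^ 3 = 0 ∧ N.diag = A.diag := by
  refine ⟨commutatorTraceNilpotent x y (A 0 0) (A 1 1),
    commutatorTraceNilpotent_pow_three .., ?_⟩
  rw [commutatorTraceNilpotent_diag, ← h, Matrix.trace_fin_three]
  ext i
  fin_cases i <;> simp
  abel

end Fin3

theorem stmt_18 (R : Type*) [Ring R] (A : Matrix (Fin 3) (Fin 3) R)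
    (h : ∃ x y : R, Matrix.trace A = x * y - y * x) :
    ∃ N K L : Matrix (Fin 3) (Fin 3) R,
      A = N + K + L ∧ N ^ 3 = 0 ∧
      (∀ i j : Fin 3, j ≤ i → K i j = 0) ∧
      (∀ i j : Fin 3, i ≤ j → L i j = 0) ∧
      K ^ 3 = 0 ∧ L ^ 3 = 0 := by
  obtain ⟨x, y, hxy⟩ := h
  obtain ⟨N, hN, hdiag⟩ := exists_pow_three_eq_zero_diag_eq hxy
  have hK : ∀ i j, j ≤ i → (A - N).strictUpper i j = 0 := fun _ _ =>
    (A - N).strictUpper_apply_of_le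
  have hL : ∀ i j, i ≤ j → (A - N).strictLower i j = 0 := fun _ _ =>
    (A - N).strictLower_apply_of_le
  refine ⟨N, (A - N).strictUpper, (A - N).strictLower, ?_, hN, hK, hL,
    Matrix.pow_eq_zero_of_upper hK, Matrix.pow_eq_zero_of_lower hL⟩
  have hzero (i : Fin 3) : (A - N) i i = 0 := by
    simpa [sub_eq_zero] using congr_fun hdiag.symm i
  rw [add_assoc, Matrix.strictUpper_add_strictLower hzero, add_sub_cancel]
end

section
/- Let R be a unital ring, n ≥ 3, and A an n×n matrix over R whose trace is a sum of k commutators. Then A is a sum of ⌊log₂ n⌋ + k + 2 nilpotent matrices, of which ⌊log₂ n⌋ have nilpotency index at most 2 and k have nilpotency index at most 3. -/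
/-!
A rank-one matrix `u vᵀ` squares to `(v ⬝ u) • u vᵀ`, so it is square-zero when `v ⬝ u = 0`.
With `u = x e₀ - y x e₁` and `v = y e₀ + e₁` its trace is the commutator `x y - y x`.
Subtracting these from `A` leaves a trace-zero matrix `B`; then `diag B ⬝ 1ᵀ` is square-zero
with the same diagonal as `B`, and what remains has zero diagonal, so it is the sum of its
strictly lower and strictly upper triangular parts, both nilpotent.
-/

namespace Matrix

variable {R ι : Type*} [Fintype ι] [DecidableEq ι]

section Semiring

variable [Semiring R]

theorem vecMulVec_sq_eq_zero {u v : ι → R} (h : v ⬝ᵥ u = 0) : vecMulVec u v ^ 2 = 0 := by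
  rw [sq, vecMulVec_mul_vecMulVec, h, zero_smul, vecMulVec_zero]

theorem exists_sq_eq_zero_diag_eq_of_trace_eq_zero {B : Matrix ι ι R} (h : B.trace = 0) :
    ∃ N : Matrix ι ι R, N ^ 2 = 0 ∧ N.diag = B.diag :=
  ⟨vecMulVec B.diag 1, vecMulVec_sq_eq_zero (by rwa [one_dotProduct, ← trace]),
    by rw [diag_vecMulVec, mul_one]⟩

theorem pow_eq_zero_of_apply_eq_zero_of_le {m : ℕ} (f : ι → Fin m) (M : Matrix ι ι R)
    (hM : ∀ i j, f j ≤ f i → M i j = 0) : M ^ m = 0 := by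
  have key : ∀ k i j, (f j : ℕ) < f i + k → (M ^ k) i j = 0 := by
    intro k
    induction k with
    | zero =>
      intro i j hij
      exact one_apply_ne fun h => by subst h; omega
    | succ k ih =>
      intro i j hij
      rw [pow_succ, mul_apply]
      refine Finset.sum_eq_zero fun l _ => ?_
      rcases lt_or_ge (f l : ℕ) (f i + k) with hl | hl
      · rw [ih i l hl, zero_mul]
      · rw [hM l j (Fin.le_def.2 (by omega)), mul_zero]
  ext i j
  exact key m i j (by omega)

theorem exists_isNilpotent_add_of_diag_eq_zero {n : ℕ} {C : Matrix (Fin n) (Fin n) R}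
    (hC : C.diag = 0) : ∃ P Q : Matrix (Fin n) (Fin n) R,
      IsNilpotent P ∧ IsNilpotent Q ∧ C = P + Q := by
  refine ⟨of fun i j => if j < i then C i j else 0, of fun i j => if i < j then C i j else 0,
    ⟨n, pow_eq_zero_of_apply_eq_zero_of_le Fin.rev _ fun i j hij => ?_⟩,
    ⟨n, pow_eq_zero_of_apply_eq_zero_of_le id _ fun i j hij => ?_⟩, ?_⟩
  · simp only [of_apply, Fin.rev_le_rev] at hij ⊢
    exact if_neg hij.not_gt
  · simp only [of_apply, id] at hij ⊢
    exact if_neg hij.not_gt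
  · ext i j
    rcases lt_trichotomy i j with hij | rfl | hij
    · simp [hij, hij.not_gt]
    · simpa using congrFun hC i
    · simp [hij, hij.not_gt]

end Semiring

variable [Ring R]

theorem exists_sq_eq_zero_trace_eq_commutator {i j : ι} (hij : i ≠ j) (x y : R) :
    ∃ M : Matrix ι ι R, M ^ 2 = 0 ∧ M.trace = x * y - y * x := by
  refine ⟨vecMulVec (Pi.single i x - Pi.single j (y * x)) (Pi.single i y + Pi.single j 1),
    vecMulVec_sq_eq_zero ?_, ?_⟩ <;>
  simp [dotProduct_add, hij, hij.symm, sub_eq_add_neg]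

theorem exists_sq_eq_zero_add_isNilpotent_add_of_trace_eq_zero {n : ℕ}
    {B : Matrix (Fin n) (Fin n) R} (hB : B.trace = 0) :
    ∃ N P Q : Matrix (Fin n) (Fin n) R,
      N ^ 2 = 0 ∧ IsNilpotent P ∧ IsNilpotent Q ∧ B = N + P + Q := by
  obtain ⟨N, hN, hdiag⟩ := exists_sq_eq_zero_diag_eq_of_trace_eq_zero hB
  obtain ⟨P, Q, hP, hQ, hPQ⟩ :=
    exists_isNilpotent_add_of_diag_eq_zero (C := B - N) (by rw [diag_sub, hdiag, sub_self])
  exact ⟨N, P, Q, hN, hP, hQ, by rw [add_assoc, ← hPQ, add_sub_cancel]⟩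

end Matrix

open Matrix in
theorem stmt_19 (R : Type*) [Ring R] (n k : ℕ) (hn : 3 ≤ n)
    (A : Matrix (Fin n) (Fin n) R)
    (h : ∃ x y : Fin k → R,
      Matrix.trace A = ∑ i, (x i * y i - y i * x i)) :
    ∃ N : Fin (Nat.log 2 n) → Matrix (Fin n) (Fin n) R,
    ∃ M : Fin k → Matrix (Fin n) (Fin n) R,
    ∃ P Q : Matrix (Fin n) (Fin n) R,
      (∀ i, N i ^ 2 = 0) ∧ (∀ i, M i ^ 3 = 0) ∧
      IsNilpotent P ∧ IsNilpotent Q ∧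
      A = (∑ i, N i) + (∑ i, M i) + P + Q := by
  obtain ⟨x, y, htr⟩ := h
  have h01 : (⟨0, by omega⟩ : Fin n) ≠ ⟨1, by omega⟩ := by simp
  choose M hM hMtr using fun i => exists_sq_eq_zero_trace_eq_commutator h01 (x i) (y i)
  obtain ⟨N₀, P, Q, hN₀, hP, hQ, hB⟩ :=
    exists_sq_eq_zero_add_isNilpotent_add_of_trace_eq_zero (B := A - ∑ i, M i)
      (by simp only [trace_sub, trace_sum, hMtr, htr, sub_self])
  have : NeZero (Nat.log 2 n) := ⟨(Nat.log_pos one_lt_two (by omega)).ne'⟩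
  refine ⟨Pi.single 0 N₀, M, P, Q, fun i => ?_, fun i => pow_eq_zero_of_le (by norm_num) (hM i),
    hP, hQ, ?_⟩
  · rcases eq_or_ne i 0 with rfl | hi
    · simpa using hN₀
    · simp [hi]
  · rw [Finset.sum_pi_single' 0 N₀, if_pos (Finset.mem_univ _), ← sub_add_cancel A (∑ i, M i),
      hB]
    abel
end
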